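/- arXiv:1903.10455 — 3 statements merged into one kernel-verified Lean document; each statement's English description precedes it below -/
import Mathlib

section
/- Let μ be a Borel probability measure on [0,1] whose support is not contained in {0,1}, and let A, B be positive definite n×n complex matrices. Then φ_μ(A,B) ≥ 0, and φ_μ(A,B) = 0 if and only if A = B. -/
open MeasureTheory Matrix
open scoped ComplexOrder

/-- `f_μ(x) = ∫_{[0,1]} x / ((1-λ)x + λ) dμ(λ)`. -/
noncomputable def fmu (μ : Measure ℝ) (x : ℝ) : ℝ := ∫ l, x / ((1 - l) * x + l) ∂μ

/-- The center of mass `c(μ) = ∫_{[0,1]} λ dμ(λ)`. -/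
noncomputable def cmu (μ : Measure ℝ) : ℝ := ∫ l, l ∂μ

/-- The positive square root of a positive definite matrix, via functional calculus. -/
noncomputable def matSqrt {n : ℕ} (A : Matrix (Fin n) (Fin n) ℂ) : Matrix (Fin n) (Fin n) ℂ :=
  cfc Real.sqrt A

/-- The Kubo–Ando mean `A σ_μ B = A^{1/2} f_μ(A^{-1/2} B A^{-1/2}) A^{1/2}`. -/
noncomputable def kuboAndo {n : ℕ} (μ : Measure ℝ) (A B : Matrix (Fin n) (Fin n) ℂ) :
    Matrix (Fin n) (Fin n) ℂ :=
  matSqrt A * cfc (fmu μ) ((matSqrt A)⁻¹ * B * (matSqrt A)⁻¹) * matSqrt A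

/-- The generalized quantum Hellinger divergence
`φ_μ(A,B) = Tr((1-c(μ))A + c(μ)B - A σ_μ B)`. -/
noncomputable def qhd {n : ℕ} (μ : Measure ℝ) (A B : Matrix (Fin n) (Fin n) ℂ) : ℝ :=
  (((1 - cmu μ) • A + cmu μ • B - kuboAndo μ A B).trace).re

/-!
Writing `g(x) = (1 - c(μ)) + c(μ) x - f_μ(x)`, one has
`g(x) = ∫ λ (1 - λ) (x - 1)² / ((1 - λ) x + λ) dμ(λ)` for `x > 0`, so `g ≥ 0` on `(0, ∞)`,
and since `μ` charges `(0, 1)` the integral vanishes only at `x = 1`.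
With `S = A^{1/2}` and `X = S⁻¹ B S⁻¹ > 0`, the matrix `(1 - c(μ)) A + c(μ) B - A σ_μ B` is
exactly `S g(X) S`, which is positive semidefinite; so its trace vanishes iff `g(X) = 0`, i.e. iff
the spectrum of `X` lies in `{1}`, i.e. iff `X = 1`, i.e. iff `B = S² = A`.
-/

/-- `φ_μ(1, x)`, the divergence of two positive scalars. -/
noncomputable def scalarQhd (μ : Measure ℝ) (x : ℝ) : ℝ := 1 - cmu μ + cmu μ * x - fmu μ x

section Scalar

variable {μ : Measure ℝ} {x l : ℝ}

lemma one_sub_mul_add_pos (hx : 0 < x) (hl : l ∈ Set.Icc (0 : ℝ) 1) : 0 < (1 - l) * x + l := by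
  rcases hl.1.eq_or_lt with rfl | hl0
  · simpa using hx
  · nlinarith [hl.2]

lemma hellinger_integrand_nonneg (hx : 0 < x) (hl : l ∈ Set.Icc (0 : ℝ) 1) :
    0 ≤ l * (1 - l) * (x - 1) ^ 2 / ((1 - l) * x + l) := by
  have hD := one_sub_mul_add_pos hx hl
  have hl1 : 0 ≤ 1 - l := sub_nonneg.2 hl.2
  have hl0 := hl.1
  positivity

lemma integrable_of_continuousOn_Icc [IsFiniteMeasure μ] (hμ : ∀ᵐ l ∂μ, l ∈ Set.Icc (0 : ℝ) 1)
    {f : ℝ → ℝ} (hf : ContinuousOn f (Set.Icc 0 1)) : Integrable f μ := by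
  rw [← Measure.restrict_eq_self_of_ae_mem hμ]
  exact hf.integrableOn_compact isCompact_Icc

lemma scalarQhd_eq_integral [IsProbabilityMeasure μ] (hμ : ∀ᵐ l ∂μ, l ∈ Set.Icc (0 : ℝ) 1)
    (hx : 0 < x) :
    scalarQhd μ x = ∫ l, l * (1 - l) * (x - 1) ^ 2 / ((1 - l) * x + l) ∂μ := by
  have hdiv : ContinuousOn (fun l => x / ((1 - l) * x + l)) (Set.Icc 0 1) :=
    continuousOn_const.div (by fun_prop) fun l hl => (one_sub_mul_add_pos hx hl).ne'
  have hid : Integrable (fun l : ℝ => l) μ :=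
    integrable_of_continuousOn_Icc hμ continuous_id.continuousOn
  have hlin : Integrable (fun l : ℝ => 1 + (x - 1) * l) μ :=
    (integrable_const 1).add (hid.const_mul _)
  have haffine : 1 - cmu μ + cmu μ * x = ∫ l, 1 + (x - 1) * l ∂μ := by
    rw [integral_add (integrable_const 1) (hid.const_mul _), integral_const_mul, cmu]
    simp only [integral_const, probReal_univ, smul_eq_mul, mul_one]
    ring
  rw [scalarQhd, haffine, fmu, ← integral_sub hlin (integrable_of_continuousOn_Icc hμ hdiv)]
  refine integral_congr_ae (hμ.mono fun l hl => ?_)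
  have hD := (one_sub_mul_add_pos hx hl).ne'
  dsimp only [Pi.sub_apply]
  rw [eq_div_iff hD, sub_mul, div_mul_cancel₀ _ hD]
  ring

lemma scalarQhd_nonneg [IsProbabilityMeasure μ] (hμ : ∀ᵐ l ∂μ, l ∈ Set.Icc (0 : ℝ) 1)
    (hx : 0 < x) : 0 ≤ scalarQhd μ x := by
  rw [scalarQhd_eq_integral hμ hx]
  exact integral_nonneg_of_ae (hμ.mono fun l hl => hellinger_integrand_nonneg hx hl)

lemma scalarQhd_eq_zero_iff [IsProbabilityMeasure μ] (hμ : ∀ᵐ l ∂μ, l ∈ Set.Icc (0 : ℝ) 1)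
    (hsupp : μ ({0, 1} : Set ℝ)ᶜ ≠ 0) (hx : 0 < x) : scalarQhd μ x = 0 ↔ x = 1 := by
  rw [scalarQhd_eq_integral hμ hx]
  refine ⟨fun h => ?_, fun h => by simp [h]⟩
  by_contra hx1
  have hint : Integrable (fun l => l * (1 - l) * (x - 1) ^ 2 / ((1 - l) * x + l)) μ :=
    integrable_of_continuousOn_Icc hμ
      ((by fun_prop : Continuous fun l : ℝ => l * (1 - l) * (x - 1) ^ 2).continuousOn.div
        (by fun_prop) fun l hl => (one_sub_mul_add_pos hx hl).ne')
  have hzero := (integral_eq_zero_iff_of_nonneg_ae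
    (hμ.mono fun l hl => hellinger_integrand_nonneg hx hl) hint).1 h
  -- off `{0, 1}` the integrand is positive, so `μ` would be carried by `{0, 1}`
  refine hsupp (ae_iff.1 ((hzero.and hμ).mono fun l ⟨hl0, hl⟩ => ?_))
  have hd := (one_sub_mul_add_pos hx hl).ne'
  have hx1' : (x - 1) ^ 2 ≠ 0 := pow_ne_zero _ (sub_ne_zero.2 hx1)
  simp only [Pi.zero_apply, div_eq_zero_iff, mul_eq_zero, hx1', hd, or_false, sub_eq_zero] at hl0
  simpa [eq_comm (a := (1 : ℝ))] using hl0

end Scalar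

open scoped MatrixOrder

namespace Matrix

section PosSemidef

variable {m : Type*} [Fintype m] {M : Matrix m m ℂ}

lemma PosSemidef.re_trace_nonneg (hM : M.PosSemidef) : 0 ≤ M.trace.re :=
  (Complex.nonneg_iff.1 hM.trace_nonneg).1

lemma PosSemidef.re_trace_eq_zero_iff (hM : M.PosSemidef) : M.trace.re = 0 ↔ M = 0 := by
  rw [← hM.trace_eq_zero_iff, Complex.ext_iff, ← (Complex.nonneg_iff.1 hM.trace_nonneg).2]
  simp

end PosSemidef

section Conj

variable {m : Type*} [Fintype m] [DecidableEq m]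

lemma mul_conj_inv_mul {R : Type*} [CommRing R] {S B : Matrix m m R} (hS : IsUnit S) :
    S * (S⁻¹ * B * S⁻¹) * S = B := by
  have hdet := (isUnit_iff_isUnit_det S).1 hS
  rw [mul_assoc, mul_assoc, nonsing_inv_mul _ hdet, mul_one, mul_nonsing_inv_cancel_left _ _ hdet]

lemma conj_inv_eq_one_iff {R : Type*} [CommRing R] {S B : Matrix m m R} (hS : IsUnit S) :
    S⁻¹ * B * S⁻¹ = 1 ↔ B = S * S := by
  have hdet := (isUnit_iff_isUnit_det S).1 hS
  constructor
  · intro h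
    rw [← mul_conj_inv_mul (B := B) hS, h, mul_one]
  · rintro rfl
    rw [nonsing_inv_mul_cancel_left _ _ hdet, mul_nonsing_inv _ hdet]

lemma PosDef.conj_inv {𝕜 : Type*} [RCLike 𝕜] {S B : Matrix m m 𝕜} (hB : B.PosDef)
    (hSH : S.IsHermitian) (hS : IsUnit S) : (S⁻¹ * B * S⁻¹).PosDef := by
  have := (IsUnit.posDef_star_left_conjugate_iff (x := B) (isUnit_nonsing_inv_iff.2 hS)).2 hB
  rwa [star_eq_conjTranspose, hSH.inv.eq] at this

end Conj

end Matrix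

section MatSqrt

variable {n : ℕ} {A : Matrix (Fin n) (Fin n) ℂ}

lemma matSqrt_isHermitian (A : Matrix (Fin n) (Fin n) ℂ) : (matSqrt A).IsHermitian :=
  cfc_predicate Real.sqrt A

lemma matSqrt_mul_self (hA : A.PosDef) : matSqrt A * matSqrt A = A :=
  calc matSqrt A * matSqrt A = cfc (fun x => √x * √x) A := (cfc_mul ..).symm
    _ = cfc (fun x => x) A :=
      cfc_congr fun _ hx => Real.mul_self_sqrt (hA.isStrictlyPositive.spectrum_pos hx).le
    _ = A := cfc_id' ℝ A

lemma isUnit_matSqrt (hA : A.PosDef) : IsUnit (matSqrt A) :=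
  (isUnit_cfc_iff Real.sqrt A).2 fun _ hx =>
    (Real.sqrt_pos.2 (hA.isStrictlyPositive.spectrum_pos hx)).ne'

end MatSqrt

noncomputable def qhdMatrix {n : ℕ} (μ : Measure ℝ) (A B : Matrix (Fin n) (Fin n) ℂ) :
    Matrix (Fin n) (Fin n) ℂ :=
  (1 - cmu μ) • A + cmu μ • B - kuboAndo μ A B

section Divergence

variable {μ : Measure ℝ}

lemma cfc_scalarQhd {m : Type*} [Fintype m] [DecidableEq m] {X : Matrix m m ℂ}
    (hX : IsSelfAdjoint X) :
    cfc (scalarQhd μ) X = (1 - cmu μ) • (1 : Matrix m m ℂ) + cmu μ • X - cfc (fmu μ) X := by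
  have hcont (f : ℝ → ℝ) : ContinuousOn f (spectrum ℝ X) := finite_real_spectrum.continuousOn f
  change cfc (fun x => 1 - cmu μ + cmu μ * x - fmu μ x) X = _
  rw [cfc_sub _ _ X (hcont _) (hcont _), cfc_const_add _ _ X (hcont _),
    cfc_const_mul_id _ X, Algebra.algebraMap_eq_smul_one]

variable {n : ℕ} {A B : Matrix (Fin n) (Fin n) ℂ}

lemma qhdMatrix_eq_conj (hA : A.PosDef) (hB : B.IsHermitian) :
    qhdMatrix μ A B
      = matSqrt A * cfc (scalarQhd μ) ((matSqrt A)⁻¹ * B * (matSqrt A)⁻¹) * matSqrt A := by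
  have hSinv : ((matSqrt A)⁻¹)ᴴ = (matSqrt A)⁻¹ := (matSqrt_isHermitian A).inv
  have hX : ((matSqrt A)⁻¹ * B * (matSqrt A)⁻¹).IsHermitian := by
    simpa [hSinv] using isHermitian_conjTranspose_mul_mul (matSqrt A)⁻¹ hB
  rw [qhdMatrix, cfc_scalarQhd hX, mul_sub, mul_add, sub_mul, add_mul, mul_smul_comm,
    mul_smul_comm, smul_mul_assoc, smul_mul_assoc, mul_one, matSqrt_mul_self hA,
    mul_conj_inv_mul (isUnit_matSqrt hA), kuboAndo]

lemma cfc_scalarQhd_eq_zero_iff [IsProbabilityMeasure μ] (hμ : ∀ᵐ l ∂μ, l ∈ Set.Icc (0 : ℝ) 1)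
    (hsupp : μ ({0, 1} : Set ℝ)ᶜ ≠ 0) {X : Matrix (Fin n) (Fin n) ℂ} (hX : X.PosDef) :
    cfc (scalarQhd μ) X = 0 ↔ X = 1 := by
  constructor
  · intro h
    have hzero := eqOn_of_cfc_eq_cfc (h.trans (cfc_zero ℝ X).symm)
      (finite_real_spectrum.continuousOn _) (finite_real_spectrum.continuousOn _)
    exact CFC.eq_one_of_spectrum_subset_one X fun x hx =>
      (scalarQhd_eq_zero_iff hμ hsupp (hX.isStrictlyPositive.spectrum_pos hx)).1 (hzero hx)
  · rintro rfl
    rw [cfc_apply_one, (scalarQhd_eq_zero_iff hμ hsupp one_pos).2 rfl, map_zero]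

lemma posSemidef_qhdMatrix [IsProbabilityMeasure μ] (hμ : ∀ᵐ l ∂μ, l ∈ Set.Icc (0 : ℝ) 1)
    (hA : A.PosDef) (hB : B.PosDef) : (qhdMatrix μ A B).PosSemidef := by
  have hX := hB.conj_inv (matSqrt_isHermitian A) (isUnit_matSqrt hA)
  have hg : 0 ≤ cfc (scalarQhd μ) ((matSqrt A)⁻¹ * B * (matSqrt A)⁻¹) :=
    cfc_nonneg fun x hx => scalarQhd_nonneg hμ (hX.isStrictlyPositive.spectrum_pos hx)
  rw [qhdMatrix_eq_conj hA hB.1]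
  simpa only [(matSqrt_isHermitian A).eq] using
    hg.posSemidef.conjTranspose_mul_mul_same (matSqrt A)

lemma qhdMatrix_eq_zero_iff [IsProbabilityMeasure μ] (hμ : ∀ᵐ l ∂μ, l ∈ Set.Icc (0 : ℝ) 1)
    (hsupp : μ ({0, 1} : Set ℝ)ᶜ ≠ 0) (hA : A.PosDef) (hB : B.PosDef) :
    qhdMatrix μ A B = 0 ↔ A = B := by
  have hS := isUnit_matSqrt hA
  rw [qhdMatrix_eq_conj hA hB.1, hS.mul_left_eq_zero, hS.mul_right_eq_zero,
    cfc_scalarQhd_eq_zero_iff hμ hsupp (hB.conj_inv (matSqrt_isHermitian A) hS),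
    conj_inv_eq_one_iff hS, matSqrt_mul_self hA, eq_comm]

end Divergence

/-- If `μ` is a Borel probability measure on `[0,1]` whose support is not
contained in `{0,1}`, and `A, B` are positive definite, then `φ_μ(A,B) ≥ 0`, with equality
iff `A = B`. -/
theorem qhd_nonneg_and_eq_zero_iff {n : ℕ} (μ : Measure ℝ) [IsProbabilityMeasure μ]
    (hμ01 : μ (Set.Icc (0 : ℝ) 1) = 1) (hsupp : μ ({0, 1} : Set ℝ)ᶜ ≠ 0)
    (A B : Matrix (Fin n) (Fin n) ℂ) (hA : A.PosDef) (hB : B.PosDef) :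
    0 ≤ qhd μ A B ∧ (qhd μ A B = 0 ↔ A = B) := by
  have hμ : ∀ᵐ l ∂μ, l ∈ Set.Icc (0 : ℝ) 1 :=
    mem_ae_iff.2 ((prob_compl_eq_zero_iff measurableSet_Icc).2 hμ01)
  have hM := posSemidef_qhdMatrix hμ hA hB
  exact ⟨hM.re_trace_nonneg, hM.re_trace_eq_zero_iff.trans (qhdMatrix_eq_zero_iff hμ hsupp hA hB)⟩
end

section
/- Let μ and ν be Borel probability measures on [0,1] such that μ precedes ν in the convex order, i.e., ∫_{[0,1]} u dμ ≤ ∫_{[0,1]} u dν for every convex function u : [0,1] → ℝ. Then for all positive definite n×n complex matrices A and B, one has A σ_μ B ≤ A σ_ν B in the Loewner order (i.e., A σ_ν B − A σ_μ B is positive semidefinite). -/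
open MeasureTheory Matrix
open scoped ComplexOrder

/-- `μ` precedes `ν` in the convex order: `∫ u dμ ≤ ∫ u dν` for every convex
`u : [0,1] → ℝ`. -/
def ConvexOrder (μ ν : Measure ℝ) : Prop :=
  ∀ u : ℝ → ℝ, ConvexOn ℝ (Set.Icc (0 : ℝ) 1) u → ∫ l, u l ∂μ ≤ ∫ l, u l ∂ν

/-! For `x ≥ 0` the integrand `λ ↦ x / ((1 - λ) x + λ)` is convex on `[0,1]` (for `x > 0` it is
`x` times the inverse of a positive affine function; for `x = 0` it vanishes), so the convex order
gives `f_μ ≤ f_ν` on `[0, ∞)`. Since `C = A^{-1/2} B A^{-1/2}` is positive semidefinite, its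
spectrum lies in `[0, ∞)`, hence `f_μ(C) ≤ f_ν(C)` by monotonicity of the functional calculus, and
conjugating by the self-adjoint `A^{1/2}` preserves the Loewner order. -/

open Set
open scoped MatrixOrder

lemma convexOn_fmu_integrand {x : ℝ} (hx : 0 < x) :
    ConvexOn ℝ (Icc 0 1) fun l => x / ((1 - l) * x + l) := by
  have hpos : ∀ l ∈ Icc (0 : ℝ) 1, 0 < AffineMap.lineMap x 1 l := fun l ⟨hl₀, hl₁⟩ => by
    rw [AffineMap.lineMap_apply_ring']
    nlinarith [mul_nonneg (sub_nonneg.2 hl₁) hx.le]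
  have hinv := ((convexOn_zpow (-1)).comp_affineMap (AffineMap.lineMap x (1 : ℝ))).subset hpos
    (convex_Icc 0 1)
  refine (hinv.smul hx.le).congr fun l _ => ?_
  simp only [Function.comp_apply, AffineMap.lineMap_apply_ring', _root_.zpow_neg_one, smul_eq_mul]
  ring

lemma fmu_le_fmu_of_convexOrder {μ ν : Measure ℝ} (h : ConvexOrder μ ν) {x : ℝ} (hx : 0 ≤ x) :
    fmu μ x ≤ fmu ν x := by
  rcases hx.eq_or_lt with rfl | hx
  · simp [fmu]
  · exact h _ (convexOn_fmu_integrand hx)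

lemma Matrix.cfc_le_cfc {𝕜 ι : Type*} [RCLike 𝕜] [Fintype ι] [DecidableEq ι] {f g : ℝ → ℝ}
    {A : Matrix ι ι 𝕜} (h : ∀ x ∈ spectrum ℝ A, f x ≤ g x) : cfc f A ≤ cfc g A :=
  cfc_mono h (A.finite_real_spectrum.continuousOn f) (A.finite_real_spectrum.continuousOn g)

lemma kuboAndo_le_kuboAndo {n : ℕ} {μ ν : Measure ℝ} (h : ∀ x, 0 ≤ x → fmu μ x ≤ fmu ν x)
    (A : Matrix (Fin n) (Fin n) ℂ) {B : Matrix (Fin n) (Fin n) ℂ} (hB : B.PosSemidef) :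
    kuboAndo μ A B ≤ kuboAndo ν A B := by
  have hS : IsSelfAdjoint (matSqrt A) := cfc_predicate _ _
  have hC : 0 ≤ (matSqrt A)⁻¹ * B * (matSqrt A)⁻¹ :=
    IsSelfAdjoint.conjugate_nonneg (Matrix.nonneg_iff_posSemidef.mpr hB) (Matrix.IsHermitian.inv hS)
  exact hS.conjugate_le_conjugate
    (Matrix.cfc_le_cfc fun x hx => h x (spectrum_nonneg_of_nonneg hC hx))

theorem kuboAndo_mono_of_convexOrder_general {n : ℕ} (μ ν : Measure ℝ)
    (hord : ConvexOrder μ ν)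
    (A B : Matrix (Fin n) (Fin n) ℂ) (hB : B.PosDef) :
    (kuboAndo ν A B - kuboAndo μ A B).PosSemidef :=
  kuboAndo_le_kuboAndo (fun _ => fmu_le_fmu_of_convexOrder hord) A hB.posSemidef

/-- If `μ` precedes `ν` in the convex order, then `A σ_μ B ≤ A σ_ν B` in the
Loewner order for all positive definite `A, B`. -/
theorem kuboAndo_mono_of_convexOrder {n : ℕ} (μ ν : Measure ℝ)
    [IsProbabilityMeasure μ] [IsProbabilityMeasure ν]
    (hμ01 : μ (Set.Icc (0 : ℝ) 1) = 1) (hν01 : ν (Set.Icc (0 : ℝ) 1) = 1)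
    (hord : ConvexOrder μ ν)
    (A B : Matrix (Fin n) (Fin n) ℂ) (hA : A.PosDef) (hB : B.PosDef) :
    (kuboAndo ν A B - kuboAndo μ A B).PosSemidef :=
  kuboAndo_mono_of_convexOrder_general μ ν hord A B hB
end

section
/- Let μ be a Borel probability measure on [0,1]. Then f_μ is differentiable on (0,∞) and its derivative is given by f_μ'(x) = ∫_{[0,1]} λ/((1-λ)x+λ)² dμ(λ) for every x > 0. -/
open MeasureTheory

/-! On a neighbourhood of `x > 0` the denominators `(1 - λ) y + λ`, convex combinations of `y`
and `1`, stay above `min (x / 2) 1 > 0`, uniformly in `λ ∈ [0,1]`. Hence the integrand and its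
`y`-derivative `λ / ((1 - λ) y + λ)²` are uniformly bounded there, and dominated convergence
allows differentiation under the integral sign. -/

lemma min_le_one_sub_mul_add {l : ℝ} (hl : l ∈ Set.Icc (0 : ℝ) 1) (y : ℝ) :
    min y 1 ≤ (1 - l) * y + l := by
  nlinarith [min_le_left y 1, min_le_right y 1, hl.1, hl.2]

lemma hasDerivAt_div_mul_add {a b y : ℝ} (h : a * y + b ≠ 0) :
    HasDerivAt (fun y => y / (a * y + b)) (b / (a * y + b) ^ 2) y := by
  have hden : HasDerivAt (fun y => a * y + b) a y := by
    simpa using ((hasDerivAt_id y).const_mul a).add_const b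
  exact ((hasDerivAt_id' y).div hden h).congr_deriv (by ring)

lemma norm_div_sq_le_one_div_sq {l c d : ℝ} (hl : l ∈ Set.Icc (0 : ℝ) 1) (hc : 0 < c)
    (hcd : c ≤ d) : ‖l / d ^ 2‖ ≤ 1 / c ^ 2 := by
  have hd : 0 < d := hc.trans_le hcd
  rw [Real.norm_of_nonneg (by have := hl.1; positivity)]
  calc l / d ^ 2 ≤ 1 / d ^ 2 := by gcongr; exact hl.2
    _ ≤ 1 / c ^ 2 := by gcongr

/-- `f_μ` is differentiable on `(0,∞)` with
`f_μ'(x) = ∫_{[0,1]} λ/((1-λ)x+λ)² dμ(λ)`. -/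
theorem fmu_hasDerivAt (μ : Measure ℝ) [IsProbabilityMeasure μ]
    (hμ01 : μ (Set.Icc (0 : ℝ) 1) = 1) :
    ∀ x : ℝ, 0 < x → HasDerivAt (fmu μ) (∫ l, l / ((1 - l) * x + l) ^ 2 ∂μ) x := by
  intro x hx
  have hae : ∀ᵐ l ∂μ, l ∈ Set.Icc (0 : ℝ) 1 :=
    (ae_mem_iff_measure_eq measurableSet_Icc.nullMeasurableSet).2 (by simp [hμ01])
  set c := min (x / 2) 1
  have hc : 0 < c := lt_min (by linarith) one_pos
  have hden : ∀ y ∈ Metric.ball x (x / 2), ∀ l ∈ Set.Icc (0 : ℝ) 1, c ≤ (1 - l) * y + l := by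
    intro y hy l hl
    have : x / 2 < y := by
      rw [Metric.mem_ball, Real.dist_eq, abs_lt] at hy; linarith [hy.1]
    exact (min_le_min_right 1 this.le).trans (min_le_one_sub_mul_add hl y)
  have hx_ball : x ∈ Metric.ball x (x / 2) := Metric.mem_ball_self (by linarith)
  have hF_int : Integrable (fun l => x / ((1 - l) * x + l)) μ := by
    refine .of_bound (Measurable.aestronglyMeasurable (by fun_prop)) (x / c) ?_
    filter_upwards [hae] with l hl
    have hcd := hden x hx_ball l hl
    rw [Real.norm_of_nonneg (div_nonneg hx.le (hc.le.trans hcd))]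
    gcongr
  refine (hasDerivAt_integral_of_dominated_loc_of_deriv_le
    (F' := fun y l => l / ((1 - l) * y + l) ^ 2) (bound := fun _ => 1 / c ^ 2)
    (Metric.ball_mem_nhds x (by linarith : 0 < x / 2))
    (.of_forall fun y => Measurable.aestronglyMeasurable (by fun_prop)) hF_int
    (Measurable.aestronglyMeasurable (by fun_prop)) ?_ (integrable_const _) ?_).2
  · filter_upwards [hae] with l hl y hy
    exact norm_div_sq_le_one_div_sq hl hc (hden y hy l hl)
  · filter_upwards [hae] with l hl y hy
    exact hasDerivAt_div_mul_add (hc.trans_le (hden y hy l hl)).ne'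
end
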